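/- Let g : ℤ² → ℂ satisfy g(x,y) = 0 whenever |x| ≥ R or |y| ≥ R, for some positive integer R, and let N be an integer with N > 6R + 2. Let M_ℤ denote the Margulis walk operator on functions on ℤ², (M_ℤ g)(v) = (1/8)·Σ_{T∈𝒮_ℤ} g(T⁻¹(v)), and let M_N denote the Margulis walk operator on functions on (ZMod N)². Let g̅ : (ZMod N)² → ℂ be the reduction of g mod N (well-defined since each residue class meets the support of g at most once). Then ‖g̅‖₂ = ‖g‖₂ and ‖M_N g̅‖₂ = ‖M_ℤ g‖₂, where ‖·‖₂ denotes the ℓ² norm on the respective index sets. -/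

import Mathlib

open BigOperators

noncomputable section

/-- The eight Margulis transformations, over any commutative ring.
Indices 0–3 are `T₁(v) = S₁v`, `T₂(v) = S₁v + (1,0)ᵀ`, `T₃(v) = S₂v`,
`T₄(v) = S₂v − (0,1)ᵀ` with `S₁ = [[1,2],[0,1]]`, `S₂ = [[1,0],[2,1]]`;
indices 4–7 are their respective inverses. -/
def marg {R : Type*} [CommRing R] : Fin 8 → R × R → R × R
  | 0 => fun v => (v.1 + 2 * v.2, v.2)
  | 1 => fun v => (v.1 + 2 * v.2 + 1, v.2)
  | 2 => fun v => (v.1, v.2 + 2 * v.1)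
  | 3 => fun v => (v.1, v.2 + 2 * v.1 - 1)
  | 4 => fun v => (v.1 - 2 * v.2, v.2)
  | 5 => fun v => (v.1 - 2 * v.2 - 1, v.2)
  | 6 => fun v => (v.1, v.2 - 2 * v.1)
  | 7 => fun v => (v.1, v.2 - 2 * v.1 + 1)

/-- The inverse of the `i`-th Margulis transformation (the family is closed under
inverses: `marg (i+4)` is the inverse of `marg i`). -/
def margInv {R : Type*} [CommRing R] (i : Fin 8) : R × R → R × R := marg (i + 4)

/-- The reduction of a (finitely supported) function on `ℤ²` to `(ZMod N)²`, summing
over each residue class. -/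
def reduceMod (N : ℕ) (g : ℤ × ℤ → ℂ) : ZMod N × ZMod N → ℂ :=
  fun v => ∑' p : ℤ × ℤ, if ((p.1 : ZMod N), (p.2 : ZMod N)) = v then g p else 0

/-!
Reduction mod `N` is injective on the box `(-B, B)²` once `2B ≤ N`, so on a function supported
there it only relabels the nonzero values and preserves the `ℓ²` norm. Each Margulis map sends
`(-R, R)²` into `(-3R, 3R)²`, so `M_ℤ g` is supported in a box on which reduction is still
injective (`6R ≤ N`), and reduction commutes with the walk because the Margulis maps are given by
the same integer formulas on `ℤ²` and on `(ZMod N)²`.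
-/

def margulisWalk {R : Type*} [CommRing R] (g : R × R → ℂ) (v : R × R) : ℂ :=
  (1 / 8 : ℂ) * ∑ i : Fin 8, g (margInv i v)

def castMod (N : ℕ) (p : ℤ × ℤ) : ZMod N × ZMod N := ((p.1 : ZMod N), (p.2 : ZMod N))

def intBox (B : ℕ) : Set (ℤ × ℤ) := Set.Ioo (-(B : ℤ)) B ×ˢ Set.Ioo (-(B : ℤ)) B

lemma intBox_finite (B : ℕ) : (intBox B).Finite :=
  (Set.finite_Ioo _ _).prod (Set.finite_Ioo _ _)

section Margulis

variable {R S : Type*} [CommRing R] [CommRing S]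

lemma marg_margInv (i : Fin 8) (v : R × R) : marg i (margInv i v) = v := by
  fin_cases i <;> simp [marg, margInv, Prod.ext_iff] <;> ring

lemma margInv_marg (i : Fin 8) (v : R × R) : margInv i (marg i v) = v := by
  fin_cases i <;> simp [marg, margInv, Prod.ext_iff] <;> ring

variable (R) in
def margEquiv (i : Fin 8) : R × R ≃ R × R where
  toFun := marg i
  invFun := margInv i
  left_inv := margInv_marg i
  right_inv := marg_margInv i

lemma map_marg (f : R →+* S) (i : Fin 8) (v : R × R) :
    Prod.map f f (marg i v) = marg i (Prod.map f f v) := by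
  fin_cases i <;> simp [marg, map_ofNat]

end Margulis

lemma castMod_marg (N : ℕ) (i : Fin 8) (p : ℤ × ℤ) :
    castMod N (marg i p) = marg i (castMod N p) :=
  map_marg (Int.castRingHom (ZMod N)) i p

lemma marg_mem_intBox {B : ℕ} {p : ℤ × ℤ} (hp : p ∈ intBox B) (i : Fin 8) :
    marg i p ∈ intBox (3 * B) := by
  simp only [intBox, Set.mem_prod, Set.mem_Ioo] at hp ⊢
  fin_cases i <;> simp [marg] <;> omega

lemma support_margulisWalk_subset {B : ℕ} {g : ℤ × ℤ → ℂ} (hg : g.support ⊆ intBox B) :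
    (margulisWalk g).support ⊆ intBox (3 * B) := by
  intro p hp
  obtain ⟨i, -, hi⟩ := Finset.exists_ne_zero_of_sum_ne_zero (right_ne_zero_of_mul hp)
  simpa only [marg_margInv] using marg_mem_intBox (hg hi) i

lemma castMod_injOn_intBox {B N : ℕ} (hN : 2 * B ≤ N) : Set.InjOn (castMod N) (intBox B) := by
  have key : ∀ {a b : ℤ}, |a| < B → |b| < B → (a : ZMod N) = b → a = b := by
    intro a b ha hb hab
    have hdvd := (ZMod.intCast_eq_intCast_iff_dvd_sub a b N).1 hab
    have := Int.eq_zero_of_abs_lt_dvd hdvd (by rw [abs_lt] at ha hb ⊢; omega)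
    omega
  rintro ⟨x, y⟩ ⟨hx, hy⟩ ⟨x', y'⟩ ⟨hx', hy'⟩ h
  simp only [castMod, Prod.mk.injEq] at h
  simp only [Set.mem_Ioo, ← abs_lt] at hx hy hx' hy'
  rw [key hx hx' h.1, key hy hy' h.2]

section Reduction

variable {N : ℕ}

lemma reduceMod_apply (g : ℤ × ℤ → ℂ) (v : ZMod N × ZMod N) :
    reduceMod N g v = ∑' p, if castMod N p = v then g p else 0 := rfl

lemma summable_reduceMod_summand {g : ℤ × ℤ → ℂ} (hg : Summable g) (v : ZMod N × ZMod N) :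
    Summable fun p => if castMod N p = v then g p else 0 := by
  refine (hg.indicator {p | castMod N p = v}).congr fun p => ?_
  simp only [Set.indicator_apply, Set.mem_ofPred_eq]

lemma reduceMod_comp_margInv (g : ℤ × ℤ → ℂ) (i : Fin 8) (v : ZMod N × ZMod N) :
    reduceMod N (g ∘ margInv i) v = reduceMod N g (margInv i v) := by
  rw [reduceMod_apply, reduceMod_apply, ← (margEquiv ℤ i).tsum_eq]
  refine tsum_congr fun q => ?_
  simp only [Function.comp_apply, margEquiv, Equiv.coe_fn_mk, margInv_marg, castMod_marg]
  congr 1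
  exact propext (margEquiv (ZMod N) i).eq_symm_apply.symm

lemma reduceMod_margulisWalk {g : ℤ × ℤ → ℂ} (hg : Summable g) (v : ZMod N × ZMod N) :
    reduceMod N (margulisWalk g) v = margulisWalk (reduceMod N g) v := by
  have hgi (i : Fin 8) : Summable (g ∘ margInv i) := (margEquiv ℤ i).symm.summable_iff.2 hg
  simp only [margulisWalk, ← reduceMod_comp_margInv]
  simp only [reduceMod_apply]
  rw [← Summable.tsum_finsetSum fun i _ => summable_reduceMod_summand (hgi i) v, ← tsum_mul_left]
  refine tsum_congr fun p => ?_
  split_ifs <;> simp [margulisWalk]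

lemma reduceMod_castMod {g : ℤ × ℤ → ℂ} (hinj : Set.InjOn (castMod N) g.support)
    {p : ℤ × ℤ} (hp : p ∈ g.support) : reduceMod N g (castMod N p) = g p := by
  rw [reduceMod_apply, tsum_eq_single p fun q hq => ?_, if_pos rfl]
  by_cases hq' : q ∈ g.support
  · rw [if_neg fun h => hq (hinj hq' hp h)]
  · simp [Function.notMem_support.1 hq']

lemma reduceMod_eq_zero {g : ℤ × ℤ → ℂ} {v : ZMod N × ZMod N}
    (hv : ∀ p, castMod N p = v → g p = 0) : reduceMod N g v = 0 := by
  simp [reduceMod_apply, ite_eq_right_iff.2 (hv _)]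

lemma sum_norm_sq_reduceMod [NeZero N] {g : ℤ × ℤ → ℂ}
    (hinj : Set.InjOn (castMod N) g.support) :
    ∑ v, ‖reduceMod N g v‖ ^ 2 = ∑' p, ‖g p‖ ^ 2 := by
  have hfin : g.support.Finite := Set.Finite.of_finite_image (Set.toFinite _) hinj
  set s := hfin.toFinset
  calc ∑ v, ‖reduceMod N g v‖ ^ 2
      = ∑ v ∈ s.image (castMod N), ‖reduceMod N g v‖ ^ 2 := by
        refine (Finset.sum_subset (Finset.subset_univ _) fun v _ hv => ?_).symm
        rw [reduceMod_eq_zero fun p hp => ?_, norm_zero, sq, zero_mul]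
        by_contra hgp
        exact hv (Finset.mem_image.2 ⟨p, hfin.mem_toFinset.2 hgp, hp⟩)
    _ = ∑ p ∈ s, ‖g p‖ ^ 2 := by
        rw [Finset.sum_image fun p hp q hq => hinj (hfin.mem_toFinset.1 hp) (hfin.mem_toFinset.1 hq)]
        exact Finset.sum_congr rfl fun p hp => by rw [reduceMod_castMod hinj (hfin.mem_toFinset.1 hp)]
    _ = ∑' p, ‖g p‖ ^ 2 := by
        refine (tsum_eq_sum fun p hp => ?_).symm
        rw [Function.notMem_support.1 (mt hfin.mem_toFinset.2 hp), norm_zero, sq, zero_mul]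

end Reduction

theorem reduction_preserves_norms_general (R : ℕ) (g : ℤ × ℤ → ℂ)
    (hsupp : ∀ p : ℤ × ℤ, ((R : ℤ) ≤ |p.1| ∨ (R : ℤ) ≤ |p.2|) → g p = 0)
    (N : ℕ) [NeZero N] (hN : 6 * R + 2 < N) :
    Real.sqrt (∑ v : ZMod N × ZMod N, ‖reduceMod N g v‖ ^ 2)
      = Real.sqrt (∑' p : ℤ × ℤ, ‖g p‖ ^ 2)
    ∧ Real.sqrt (∑ v : ZMod N × ZMod N,
          ‖(1 / 8 : ℂ) * ∑ i : Fin 8, reduceMod N g (margInv i v)‖ ^ 2)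
      = Real.sqrt (∑' p : ℤ × ℤ,
          ‖(1 / 8 : ℂ) * ∑ i : Fin 8, g (margInv i p)‖ ^ 2) := by
  have hg : g.support ⊆ intBox R := Function.support_subset_iff'.2 fun p hp => hsupp p <| by
    simp only [intBox, Set.mem_prod, Set.mem_Ioo, ← abs_lt, not_and_or, not_lt] at hp
    exact hp
  have hMg : (margulisWalk g).support ⊆ intBox (3 * R) := support_margulisWalk_subset hg
  have hsum : Summable g := summable_of_hasFiniteSupport ((intBox_finite R).subset hg)
  refine ⟨congrArg Real.sqrt (sum_norm_sq_reduceMod ((castMod_injOn_intBox (by omega)).mono hg)),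
    congrArg Real.sqrt ?_⟩
  calc ∑ v, ‖margulisWalk (reduceMod N g) v‖ ^ 2
      = ∑ v, ‖reduceMod N (margulisWalk g) v‖ ^ 2 := by simp only [reduceMod_margulisWalk hsum]
    _ = ∑' p, ‖margulisWalk g p‖ ^ 2 :=
        sum_norm_sq_reduceMod ((castMod_injOn_intBox (by omega)).mono hMg)

/-- if `g : ℤ² → ℂ` vanishes whenever `|x| ≥ R` or `|y| ≥ R` and
`N > 6R + 2`, then the reduction `ḡ` of `g` mod `N` satisfies `‖ḡ‖₂ = ‖g‖₂` and
`‖M_N ḡ‖₂ = ‖M_ℤ g‖₂`, where `M` denotes the respective Margulis walk operators. -/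
theorem reduction_preserves_norms (R : ℕ) (hR : 0 < R) (g : ℤ × ℤ → ℂ)
    (hsupp : ∀ p : ℤ × ℤ, ((R : ℤ) ≤ |p.1| ∨ (R : ℤ) ≤ |p.2|) → g p = 0)
    (N : ℕ) [NeZero N] (hN : 6 * R + 2 < N) :
    Real.sqrt (∑ v : ZMod N × ZMod N, ‖reduceMod N g v‖ ^ 2)
      = Real.sqrt (∑' p : ℤ × ℤ, ‖g p‖ ^ 2)
    ∧ Real.sqrt (∑ v : ZMod N × ZMod N,
          ‖(1 / 8 : ℂ) * ∑ i : Fin 8, reduceMod N g (margInv i v)‖ ^ 2)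
      = Real.sqrt (∑' p : ℤ × ℤ,
          ‖(1 / 8 : ℂ) * ∑ i : Fin 8, g (margInv i p)‖ ^ 2) :=
  reduction_preserves_norms_general R g hsupp N hN
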